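/- arXiv:2209.09887 — 2 statements merged into one kernel-verified Lean document; each statement's English description precedes it below -/
import Mathlib

section
/- If s ≥ |T|³ and k ≥ 1, then there exists a collection 𝓒 of subsets of 𝓑 such that: (1) every C ∈ 𝓒 satisfies |C| ≤ 3M; (2) |𝓒| ≤ e^{(log s)·M·|T|³/s}; and (3) every independent set of G is contained in some element of 𝓒. -/
/-!
Kleitman–Winston containers. Every block of `𝓑` contains exactly `s^k` of the
`s^{kd} = s^k·M` lattice points of `[0, m)^d`, and two distinct intersecting blocks have different
shapes `t ≠ t'` (blocks of one shape tile the cube), so they share at most `s^{k-1}` lattice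
points. Cauchy–Schwarz over the lattice points then shows that any `A ⊆ 𝓑` with `|A| > 2M`
contains a block meeting at least `s` others.

Given an independent set `I`, repeatedly take a block `v` meeting at least `s` others of the
current family: if `v ∈ I`, record it and delete `v` with its neighbours, otherwise delete `v`
alone. The recorded set `S ⊆ I` satisfies `(s+1)|S| ≤ |𝓑| ≤ |T|·M`, determines the whole run,
and `I` lies in `S` together with the at most `2M` blocks left at the end. So there are at most
`(|𝓑|+1)^{|𝓑|/(s+1)} ≤ s^{|T|²·|T|M/s}` containers, using `|𝓑| + 1 ≤ s^{k(d-1)+2}` and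
`k(d-1) + 2 ≤ |T|²`.
-/

open scoped Classical

noncomputable section

/-- The `t`-block `B_t(p) = ∏_i [s^{t i}·p i, s^{t i}·(p i + 1))`. -/
def block (d s : ℕ) (t : Fin d → ℕ) (p : Fin d → ℤ) : Set (Fin d → ℝ) :=
  Set.univ.pi fun i =>
    Set.Ico ((s : ℝ) ^ t i * (p i : ℝ)) ((s : ℝ) ^ t i * ((p i : ℝ) + 1))

/-- The family `𝓑` of all `t`-blocks with `∑ t i = k` contained in `[0, s^k]^d`. -/
def blockFamily (d s k : ℕ) : Set (Set (Fin d → ℝ)) :=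
  {B | ∃ t : Fin d → ℕ, ∃ p : Fin d → ℤ, (∑ i, t i) = k ∧
    (∀ i, 0 ≤ p i ∧ p i < (s : ℤ) ^ (k - t i)) ∧ B = block d s t p}

open Finset

theorem Finset.card_filter_powerset_card_le {α : Type*} (V : Finset α) (q : ℕ) :
    #{S ∈ V.powerset | #S ≤ q} ≤ (#V + 1) ^ q := by
  calc #{S ∈ V.powerset | #S ≤ q}
      = ∑ j ∈ range (q + 1), #{S ∈ {S ∈ V.powerset | #S ≤ q} | #S = j} :=
        card_eq_sum_card_fiberwise fun S hS => by simpa [Nat.lt_succ_iff] using (mem_filter.1 hS).2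
    _ ≤ ∑ j ∈ range (q + 1), #V ^ j * 1 ^ (q - j) * q.choose j := by
        refine sum_le_sum fun j hj => ?_
        calc #{S ∈ {S ∈ V.powerset | #S ≤ q} | #S = j} ≤ #(powersetCard j V) := by
              refine card_le_card fun S hS => ?_
              simp only [mem_filter, mem_powerset] at hS
              exact mem_powersetCard.2 ⟨hS.1.1, hS.2⟩
          _ ≤ #V ^ j := by rw [card_powersetCard]; exact Nat.choose_le_pow _ _
          _ ≤ #V ^ j * 1 ^ (q - j) * q.choose j := by
              rw [one_pow, mul_one]
              exact Nat.le_mul_of_pos_right _ (Nat.choose_pos (by simpa [Nat.lt_succ_iff] using hj))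
    _ = (#V + 1) ^ q := (add_pow _ _ _).symm

theorem Finset.sq_sum_card_le_card_mul_sum_sum_card_inter {ι α : Type*} [DecidableEq α]
    (U : Finset α) (A : Finset ι) (f : ι → Finset α) (hf : ∀ i ∈ A, f i ⊆ U) :
    (∑ i ∈ A, #(f i)) ^ 2 ≤ #U * ∑ i ∈ A, ∑ j ∈ A, #(f i ∩ f j) := by
  let χ : ι → α → ℕ := fun i u => if u ∈ f i then 1 else 0
  have hcard : ∀ i ∈ A, #(f i) = ∑ u ∈ U, χ i u := fun i hi => by
    rw [sum_boole, filter_mem_eq_inter, inter_eq_right.2 (hf i hi), Nat.cast_id]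
  have hinter : ∀ i ∈ A, ∀ j, #(f i ∩ f j) = ∑ u ∈ U, χ i u * χ j u := by
    intro i hi j
    simp only [χ, ite_zero_mul_ite_zero, mul_one, ← mem_inter]
    rw [sum_boole, filter_mem_eq_inter, inter_eq_right.2 (inter_subset_left.trans (hf i hi)),
      Nat.cast_id]
  calc (∑ i ∈ A, #(f i)) ^ 2 = (∑ u ∈ U, ∑ i ∈ A, χ i u) ^ 2 := by
        rw [sum_congr rfl hcard, sum_comm]
    _ ≤ #U * ∑ u ∈ U, (∑ i ∈ A, χ i u) ^ 2 := sq_sum_le_card_mul_sum_sq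
    _ = #U * ∑ i ∈ A, ∑ j ∈ A, #(f i ∩ f j) := by
        simp_rw [sq, sum_mul_sum, sum_comm (s := U)]
        rw [sum_congr rfl fun i hi => sum_congr rfl fun j _ => hinter i hi j]

theorem Finset.sum_min_lt_sum {ι : Type*} {A : Finset ι} {t t' : ι → ℕ}
    (h : ∑ i ∈ A, t i = ∑ i ∈ A, t' i) (hne : ∃ i ∈ A, t i ≠ t' i) :
    ∑ i ∈ A, min (t i) (t' i) < ∑ i ∈ A, t i := by
  obtain ⟨j, hj, hlt⟩ : ∃ j ∈ A, t' j < t j := by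
    by_contra! hle
    obtain ⟨i, hi, hne⟩ := hne
    exact hne ((sum_eq_sum_iff_of_le hle).1 h i hi)
  exact sum_lt_sum (fun i _ => min_le_left _ _) ⟨j, hj, min_lt_iff.2 (Or.inr hlt)⟩

theorem Int.disjoint_Ico_mul_Ico_mul {a p p' : ℤ} (ha : 0 < a) (h : p ≠ p') :
    Disjoint (Ico (a * p) (a * (p + 1))) (Ico (a * p') (a * (p' + 1))) := by
  wlog hlt : p < p' generalizing p p'
  · exact (this h.symm (h.symm.lt_of_le (not_lt.1 hlt))).symm
  have := mul_le_mul_of_nonneg_left (show p + 1 ≤ p' by omega) ha.le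
  exact disjoint_left.2 fun c hc hc' => by simp only [mem_Ico] at hc hc'; omega

theorem Int.card_Ico_pow_mul (s u : ℕ) (q : ℤ) :
    #(Ico ((s : ℤ) ^ u * q) ((s : ℤ) ^ u * (q + 1))) = s ^ u := by
  rw [Int.card_Ico, mul_add_one, add_sub_cancel_left, ← Nat.cast_pow, Int.toNat_natCast]

theorem Finset.card_piAntidiag_univ_fin (d k : ℕ) :
    #(piAntidiag (univ : Finset (Fin d)) k) = (d + k - 1).choose k := by
  rw [← map_sym_eq_piAntidiag, card_map, sym_univ, card_univ, Sym.card_sym_eq_choose,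
    Fintype.card_fin]

theorem Nat.mul_add_two_le_sq_add_choose {k n : ℕ} (hk : 1 ≤ k) (hn : 1 ≤ n) :
    k * n + 2 ≤ ((k + n).choose n) ^ 2 := by
  have h₁ : n + 1 ≤ (k + n).choose n := by
    simpa [Nat.add_comm 1 n, Nat.choose_succ_self_right] using
      Nat.choose_le_choose n (by omega : 1 + n ≤ k + n)
  have h₂ : k + 1 ≤ (k + n).choose n := by
    rw [← Nat.choose_symm_add, ← Nat.choose_succ_self_right]
    exact Nat.choose_le_choose k (by omega)
  nlinarith

namespace SimpleGraph

variable {α : Type*} (G : SimpleGraph α)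

theorem card_filter_nonadj_add_degree {A : Finset α} {v : α} (hv : v ∈ A) :
    #{w ∈ A | w ≠ v ∧ ¬G.Adj v w} + (#{w ∈ A | G.Adj v w} + 1) = #A := by
  have hnbr : {w ∈ A | ¬(w ≠ v ∧ ¬G.Adj v w)} = insert v {w ∈ A | G.Adj v w} := by
    ext w
    by_cases hw : w = v
    · subst hw; simp [hv]
    · simp [hw]
  rw [← card_insert_of_notMem (by simp : v ∉ ({w ∈ A | G.Adj v w} : Finset α)), ← hnbr,
    card_filter_add_card_filter_not]

theorem exists_container_map (R D : ℕ) (V : Finset α)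
    (hsat : ∀ A ⊆ V, R < #A → ∃ v ∈ A, D ≤ #{w ∈ A | G.Adj v w})
    (A : Finset α) (hAV : A ⊆ V) :
    ∃ g : Finset α → Finset α, ∀ I ⊆ A, G.IsIndepSet I →
      ∃ S ⊆ I, (D + 1) * #S ≤ #A ∧ I ⊆ g S ∧ g S ⊆ A ∧ #(g S) ≤ R + #S := by
  induction A using Finset.strongInduction with
  | H A ih =>
  by_cases hdeg : ∃ v ∈ A, D ≤ #{w ∈ A | G.Adj v w}
  · obtain ⟨v, hvA, hv⟩ := hdeg
    set A₁ := {w ∈ A | w ≠ v ∧ ¬G.Adj v w}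
    have hA₁ := G.card_filter_nonadj_add_degree hvA
    obtain ⟨g₁, hg₁⟩ :=
      ih A₁ (filter_ssubset.2 ⟨v, hvA, by simp⟩) ((filter_subset _ _).trans hAV)
    obtain ⟨g₂, hg₂⟩ := ih (A.erase v) (erase_ssubset hvA) ((erase_subset _ _).trans hAV)
    refine ⟨fun S => if v ∈ S then insert v (g₁ (S.erase v)) else g₂ S,
      fun I hIA hI => ?_⟩
    by_cases hvI : v ∈ I
    · have hIA₁ : I.erase v ⊆ A₁ := fun w hw => by
        obtain ⟨hwv, hwI⟩ := mem_erase.1 hw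
        exact mem_filter.2 ⟨hIA hwI, hwv, hI hvI hwI (Ne.symm hwv)⟩
      obtain ⟨S, hSI, hS, hIS, hSA, hcard⟩ := hg₁ _ hIA₁ (hI.mono (by simp))
      have hvS : v ∉ S := fun h => by simpa using hSI h
      refine ⟨insert v S, insert_subset hvI (hSI.trans (erase_subset _ _)), ?_⟩
      simp only [mem_insert_self, if_true, erase_insert hvS]
      refine ⟨?_, ?_, ?_, ?_⟩
      · rw [card_insert_of_notMem hvS]; linarith
      · rw [← insert_erase hvI]
        exact insert_subset_insert v hIS
      · exact insert_subset hvA (hSA.trans (filter_subset _ _))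
      · rw [card_insert_of_notMem hvS]
        exact (card_insert_le _ _).trans (by omega)
    · obtain ⟨S, hSI, hS, hIS, hSA, hcard⟩ := hg₂ I (subset_erase.2 ⟨hIA, hvI⟩) hI
      have hvS : v ∉ S := fun h => hvI (hSI h)
      refine ⟨S, hSI, hS.trans (card_le_card (erase_subset _ _)), ?_⟩
      simpa only [hvS, if_false] using ⟨hIS, hSA.trans (erase_subset _ _), hcard⟩
  · refine ⟨fun _ => A, fun I hIA _ => ⟨∅, empty_subset _, by simp, hIA, subset_rfl, ?_⟩⟩
    simpa using not_lt.1 fun hR => hdeg (hsat A hAV hR)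

theorem exists_containers (R D : ℕ) (V : Finset α)
    (hsat : ∀ A ⊆ V, R < #A → ∃ v ∈ A, D ≤ #{w ∈ A | G.Adj v w}) :
    ∃ 𝓒 : Finset (Finset α), (∀ C ∈ 𝓒, C ⊆ V ∧ #C ≤ R + #V / (D + 1)) ∧
      #𝓒 ≤ (#V + 1) ^ (#V / (D + 1)) ∧
      ∀ I ⊆ (V : Set α), G.IsIndepSet I → ∃ C ∈ 𝓒, I ⊆ C := by
  obtain ⟨g, hg⟩ := G.exists_container_map R D V hsat V subset_rfl
  set q := #V / (D + 1)
  refine ⟨{C ∈ {S ∈ V.powerset | #S ≤ q}.image g | C ⊆ V ∧ #C ≤ R + q},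
    fun C hC => (mem_filter.1 hC).2,
    (card_filter_le _ _).trans (card_image_le.trans (V.card_filter_powerset_card_le q)),
    fun I hIV hI => ?_⟩
  lift I to Finset α using V.finite_toSet.subset hIV
  obtain ⟨S, hSI, hS, hIS, hSV, hcard⟩ := hg I (mod_cast hIV) hI
  have hSq : #S ≤ q := (Nat.le_div_iff_mul_le (Nat.succ_pos D)).2 (by linarith)
  refine ⟨g S, mem_filter.2 ⟨?_, hSV, by omega⟩, mod_cast hIS⟩
  exact mem_image_of_mem _ (mem_filter.2 ⟨mem_powerset.2 (hSI.trans (mod_cast hIV)), hSq⟩)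

end SimpleGraph

def intersectionGraph (X : Type*) : SimpleGraph (Set X) where
  Adj A B := A ≠ B ∧ ¬Disjoint A B
  symm := ⟨fun _ _ h => ⟨h.1.symm, fun h' => h.2 h'.symm⟩⟩
  loopless := ⟨fun _ h => h.1 rfl⟩

theorem intersectionGraph_adj {X : Type*} {A B : Set X} :
    (intersectionGraph X).Adj A B ↔ A ≠ B ∧ ¬Disjoint A B :=
  Iff.rfl

theorem isIndepSet_intersectionGraph_iff {X : Type*} {𝓘 : Set (Set X)} :
    (intersectionGraph X).IsIndepSet 𝓘 ↔ 𝓘.Pairwise Disjoint := by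
  simp only [SimpleGraph.isIndepSet_iff, intersectionGraph_adj]
  exact ⟨fun h A hA B hB hAB => by simpa [hAB] using h hA hB hAB,
    fun h A hA B hB hAB => by simpa [hAB] using h hA hB hAB⟩

def latticeCube (d m : ℕ) : Finset (Fin d → ℤ) :=
  Fintype.piFinset fun _ => Ico (0 : ℤ) m

theorem card_latticeCube (d m : ℕ) : #(latticeCube d m) = m ^ d := by
  simp [latticeCube]

def latticePoints (d m : ℕ) (B : Set (Fin d → ℝ)) : Finset (Fin d → ℤ) :=
  {c ∈ latticeCube d m | (fun i => (c i : ℝ)) ∈ B}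

theorem disjoint_latticePoints {d m : ℕ} {B B' : Set (Fin d → ℝ)} (h : Disjoint B B') :
    Disjoint (latticePoints d m B) (latticePoints d m B') :=
  disjoint_left.2 fun _ hc hc' => Set.disjoint_left.1 h (mem_filter.1 hc).2 (mem_filter.1 hc').2

def blockFinset (d s k : ℕ) : Finset (Set (Fin d → ℝ)) :=
  (piAntidiag univ k).biUnion fun t =>
    (Fintype.piFinset fun i => Ico (0 : ℤ) ((s : ℤ) ^ (k - t i))).image (block d s t)

section Blocks

variable {d s k : ℕ}

theorem coe_blockFinset : (blockFinset d s k : Set (Set (Fin d → ℝ))) = blockFamily d s k := by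
  ext B
  simp [blockFinset, blockFamily, eq_comm]

theorem card_blockFinset_le (hd : 1 ≤ d) :
    #(blockFinset d s k) ≤ (k + d - 1).choose (d - 1) * s ^ (k * (d - 1)) := by
  have hfiber : ∀ t ∈ piAntidiag univ k,
      #((Fintype.piFinset fun i => Ico (0 : ℤ) ((s : ℤ) ^ (k - t i))).image (block d s t)) ≤
        s ^ (k * (d - 1)) := fun t ht => by
    have htk : ∀ i ∈ univ, t i ≤ k := fun i _ =>
      (mem_piAntidiag.1 ht).1 ▸ single_le_sum (fun j _ => Nat.zero_le (t j)) (mem_univ i)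
    refine card_image_le.trans_eq ?_
    simp_rw [Fintype.card_piFinset, Int.card_Ico, sub_zero, ← Nat.cast_pow, Int.toNat_natCast]
    rw [prod_pow_eq_pow_sum, sum_tsub_distrib _ htk, (mem_piAntidiag.1 ht).1, sum_const,
      card_univ, Fintype.card_fin, smul_eq_mul, Nat.mul_sub_one, mul_comm]
  refine (card_biUnion_le_card_mul _ _ _ hfiber).trans_eq ?_
  rw [card_piAntidiag_univ_fin, Nat.choose_symm_of_eq_add (by omega : d + k - 1 = k + (d - 1)),
    Nat.add_comm d k]

theorem intCast_mem_block_iff {t : Fin d → ℕ} {p c : Fin d → ℤ} :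
    (fun i => (c i : ℝ)) ∈ block d s t p ↔
      c ∈ Fintype.piFinset fun i =>
        Ico ((s : ℤ) ^ t i * p i) ((s : ℤ) ^ t i * (p i + 1)) := by
  simp only [block, Set.mem_univ_pi, Set.mem_Ico, Fintype.mem_piFinset, mem_Ico]
  exact_mod_cast Iff.rfl

theorem latticePoints_block {t : Fin d → ℕ} {p : Fin d → ℤ} (ht : ∑ i, t i = k)
    (hp : ∀ i, 0 ≤ p i ∧ p i < (s : ℤ) ^ (k - t i)) :
    latticePoints d (s ^ k) (block d s t p) =
      Fintype.piFinset fun i => Ico ((s : ℤ) ^ t i * p i) ((s : ℤ) ^ t i * (p i + 1)) := by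
  ext c
  simp only [latticePoints, latticeCube, mem_filter, intCast_mem_block_iff,
    and_iff_right_iff_imp, Fintype.mem_piFinset, mem_Ico]
  intro hc i
  have htk : t i ≤ k := ht ▸ single_le_sum (fun j _ => Nat.zero_le (t j)) (mem_univ i)
  have hhi : (s : ℤ) ^ t i * (p i + 1) ≤ (s : ℤ) ^ k := by
    calc (s : ℤ) ^ t i * (p i + 1) ≤ (s : ℤ) ^ t i * (s : ℤ) ^ (k - t i) :=
          mul_le_mul_of_nonneg_left (hp i).2 (by positivity)
      _ = (s : ℤ) ^ k := by rw [← pow_add, Nat.add_sub_cancel' htk]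
  have hlo : 0 ≤ (s : ℤ) ^ t i * p i := mul_nonneg (by positivity) (hp i).1
  push_cast
  exact ⟨hlo.trans (hc i).1, (hc i).2.trans_le hhi⟩

theorem card_latticePoints_of_mem_blockFamily {B : Set (Fin d → ℝ)}
    (hB : B ∈ blockFamily d s k) :
    #(latticePoints d (s ^ k) B) = s ^ k := by
  obtain ⟨t, p, ht, hp, rfl⟩ := hB
  rw [latticePoints_block ht hp, Fintype.card_piFinset]
  simp_rw [Int.card_Ico_pow_mul]
  rw [prod_pow_eq_pow_sum, ht]

theorem card_latticePoints_inter_le (hs : 1 ≤ s) {B B' : Set (Fin d → ℝ)}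
    (hB : B ∈ blockFamily d s k) (hB' : B' ∈ blockFamily d s k) (hne : B ≠ B') :
    #(latticePoints d (s ^ k) B ∩ latticePoints d (s ^ k) B') ≤ s ^ (k - 1) := by
  obtain ⟨t, p, ht, hp, rfl⟩ := hB
  obtain ⟨t', p', ht', hp', rfl⟩ := hB'
  rw [latticePoints_block ht hp, latticePoints_block ht' hp', ← Fintype.piFinset_inter,
    Fintype.card_piFinset]
  by_cases htt : t = t'
  · subst htt
    obtain ⟨i, hi⟩ := Function.ne_iff.1 fun hpp : p = p' => hne (hpp ▸ rfl)
    rw [prod_eq_zero (mem_univ i) (card_eq_zero.2 (disjoint_iff_inter_eq_empty.1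
      (Int.disjoint_Ico_mul_Ico_mul (pow_pos (mod_cast hs) _) hi)))]
    exact Nat.zero_le _
  · have hmin : ∑ i, min (t i) (t' i) < k :=
      ht ▸ sum_min_lt_sum (ht.trans ht'.symm) (by simpa using Function.ne_iff.1 htt)
    calc ∏ i, #(Ico ((s : ℤ) ^ t i * p i) ((s : ℤ) ^ t i * (p i + 1)) ∩
            Ico ((s : ℤ) ^ t' i * p' i) ((s : ℤ) ^ t' i * (p' i + 1)))
        ≤ ∏ i, s ^ min (t i) (t' i) := prod_le_prod' fun i _ => by
          rcases min_choice (t i) (t' i) with h | h <;> rw [h]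
          · exact (card_le_card inter_subset_left).trans_eq (Int.card_Ico_pow_mul _ _ _)
          · exact (card_le_card inter_subset_right).trans_eq (Int.card_Ico_pow_mul _ _ _)
      _ = s ^ ∑ i, min (t i) (t' i) := prod_pow_eq_pow_sum _ _ _
      _ ≤ s ^ (k - 1) := pow_le_pow_right₀ hs (Nat.le_sub_one_of_lt hmin)

theorem sum_card_latticePoints_inter_le (hs : 1 ≤ s) {A : Finset (Set (Fin d → ℝ))}
    (hA : (A : Set (Set (Fin d → ℝ))) ⊆ blockFamily d s k) {B : Set (Fin d → ℝ)}
    (hB : B ∈ A) :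
    ∑ B' ∈ A, #(latticePoints d (s ^ k) B ∩ latticePoints d (s ^ k) B') ≤
      s ^ k + #{B' ∈ A | (intersectionGraph (Fin d → ℝ)).Adj B B'} * s ^ (k - 1) := by
  set G := intersectionGraph (Fin d → ℝ)
  have hterm : ∀ B' ∈ A, #(latticePoints d (s ^ k) B ∩ latticePoints d (s ^ k) B') ≤
      (if B = B' then s ^ k else 0) + (if G.Adj B B' then s ^ (k - 1) else 0) := by
    intro B' hB'
    by_cases hBB' : B = B'
    · subst hBB'
      rw [if_pos rfl, inter_self, card_latticePoints_of_mem_blockFamily (hA hB)]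
      exact Nat.le_add_right _ _
    by_cases hadj : G.Adj B B'
    · simpa [hBB', hadj] using card_latticePoints_inter_le hs (hA hB) (hA hB') hBB'
    · have hdisj : Disjoint B B' := by simpa [G, intersectionGraph_adj, hBB'] using hadj
      rw [disjoint_iff_inter_eq_empty.1 (disjoint_latticePoints hdisj), card_empty]
      exact Nat.zero_le _
  refine (sum_le_sum hterm).trans_eq ?_
  rw [sum_add_distrib, sum_ite_eq, if_pos hB, ← sum_filter, sum_const, smul_eq_mul]

theorem exists_le_card_adj_of_two_mul_lt_card (hs : 1 ≤ s) (hk : 1 ≤ k)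
    {A : Finset (Set (Fin d → ℝ))} (hA : (A : Set (Set (Fin d → ℝ))) ⊆ blockFamily d s k)
    (hcard : 2 * s ^ (k * (d - 1)) < #A) :
    ∃ B ∈ A, s ≤ #{B' ∈ A | (intersectionGraph (Fin d → ℝ)).Adj B B'} := by
  by_contra! hdeg
  set L := latticePoints d (s ^ k)
  set M := s ^ (k * (d - 1))
  have hsum : ∑ B ∈ A, #(L B) = #A * s ^ k := by
    rw [sum_congr rfl fun B hB => card_latticePoints_of_mem_blockFamily (hA hB), sum_const,
      smul_eq_mul]
  have hoverlap : ∀ B ∈ A, ∑ B' ∈ A, #(L B ∩ L B') < 2 * s ^ k := fun B hB => by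
    refine (sum_card_latticePoints_inter_le hs hA hB).trans_lt ?_
    calc s ^ k + #{B' ∈ A | (intersectionGraph (Fin d → ℝ)).Adj B B'} * s ^ (k - 1)
        < s ^ k + s * s ^ (k - 1) :=
          Nat.add_lt_add_left (Nat.mul_lt_mul_of_pos_right (hdeg B hB) (pow_pos hs _)) _
      _ = 2 * s ^ k := by rw [← pow_succ', Nat.sub_add_cancel hk, two_mul]
  have hcube : #(latticeCube d (s ^ k)) ≤ s ^ k * M := by
    rw [card_latticeCube, ← pow_mul, ← pow_add, Nat.mul_sub_one]
    exact pow_le_pow_right₀ hs le_add_tsub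
  have hA₀ : A.Nonempty := card_pos.1 (by omega)
  have hmain : (#A * s ^ k) * (#A * s ^ k) < (#A * s ^ k) * (2 * M * s ^ k) :=
    calc (#A * s ^ k) * (#A * s ^ k)
        ≤ #(latticeCube d (s ^ k)) * ∑ B ∈ A, ∑ B' ∈ A, #(L B ∩ L B') := by
          rw [← sq, ← hsum]
          exact sq_sum_card_le_card_mul_sum_sum_card_inter _ A L fun _ _ => filter_subset _ _
      _ ≤ s ^ k * M * ∑ B ∈ A, ∑ B' ∈ A, #(L B ∩ L B') := Nat.mul_le_mul_right _ hcube
      _ < s ^ k * M * ∑ B ∈ A, 2 * s ^ k :=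
          Nat.mul_lt_mul_of_pos_left (sum_lt_sum_of_nonempty hA₀ hoverlap) (by positivity)
      _ = (#A * s ^ k) * (2 * M * s ^ k) := by rw [sum_const, smul_eq_mul]; ring
  have := Nat.lt_of_mul_lt_mul_right (Nat.lt_of_mul_lt_mul_left hmain)
  omega

end Blocks

theorem add_one_le_pow_sq_of_le_mul {N T s e : ℕ} (hs : 2 ≤ s) (hTs : T ≤ s)
    (hN : N ≤ T * s ^ e) (he : e + 2 ≤ T ^ 2) : N + 1 ≤ s ^ T ^ 2 :=
  calc N + 1 ≤ s * s ^ e + s * s ^ e := by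
        have := Nat.mul_le_mul_right (s ^ e) hTs
        have : 1 ≤ s * s ^ e := Nat.one_le_iff_ne_zero.2 (by positivity)
        omega
    _ = 2 * (s * s ^ e) := by ring
    _ ≤ s * (s * s ^ e) := Nat.mul_le_mul_right _ hs
    _ = s ^ (e + 2) := by ring
    _ ≤ s ^ T ^ 2 := pow_le_pow_right₀ (by omega) he

theorem succ_pow_div_succ_le_exp {N T M s : ℕ} (hs : 1 ≤ s) (hN : N ≤ T * M)
    (hNs : N + 1 ≤ s ^ T ^ 2) :
    ((N + 1) ^ (N / (s + 1)) : ℝ) ≤ Real.exp (Real.log s * M * T ^ 3 / s) := by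
  set q := N / (s + 1)
  have hs₀ : (0 : ℝ) < s := by exact_mod_cast hs
  have hq : (q : ℝ) ≤ T * M / s := by
    rw [le_div_iff₀ hs₀]
    exact_mod_cast (Nat.mul_le_mul_left q (Nat.le_succ s)).trans
      ((Nat.div_mul_le_self N (s + 1)).trans hN)
  calc ((N + 1) ^ q : ℝ) ≤ ((s : ℝ) ^ T ^ 2) ^ q := by
        gcongr; exact_mod_cast hNs
    _ = Real.exp (Real.log s * (T ^ 2 * q)) := by
        rw [← pow_mul, ← Real.rpow_natCast, Real.rpow_def_of_pos hs₀]
        push_cast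
        rfl
    _ ≤ Real.exp (Real.log s * M * T ^ 3 / s) := by
        rw [Real.exp_le_exp, mul_div_assoc, mul_assoc]
        refine mul_le_mul_of_nonneg_left ?_ (Real.log_nonneg (by exact_mod_cast hs))
        calc (T : ℝ) ^ 2 * (q : ℝ) ≤ (T : ℝ) ^ 2 * (T * M / s) := by gcongr
          _ = (M : ℝ) * (T ^ 3 / s) := by ring

/-- The container lemma: if `s ≥ |T|³` (with `|T| = C(k+d-1, d-1)`), then there is a
collection `𝓒` of subsets of `𝓑`, each of size at most `3M` (with `M = s^{k(d-1)}`),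
with `|𝓒| ≤ e^{(log s)·M·|T|³/s}`, such that every independent set of the intersection
graph of `𝓑` (i.e. every pairwise disjoint subfamily) is contained in a member of `𝓒`. -/
theorem container_lemma (d s k : ℕ) (hd : 2 ≤ d) (hs : 2 ≤ s) (hk : 1 ≤ k)
    (hsT : ((k + d - 1).choose (d - 1)) ^ 3 ≤ s) :
    ∃ 𝓒 : Finset (Set (Set (Fin d → ℝ))),
      (∀ C ∈ 𝓒, C ⊆ blockFamily d s k ∧ C.ncard ≤ 3 * s ^ (k * (d - 1))) ∧
      (𝓒.card : ℝ) ≤ Real.exp (Real.log s * (s : ℝ) ^ (k * (d - 1)) *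
        ((k + d - 1).choose (d - 1) : ℝ) ^ 3 / (s : ℝ)) ∧
      (∀ I ⊆ blockFamily d s k, I.Pairwise Disjoint → ∃ C ∈ 𝓒, I ⊆ C) := by
  set T := (k + d - 1).choose (d - 1)
  set M := s ^ (k * (d - 1))
  set V := blockFinset d s k
  have hV : #V ≤ T * M := card_blockFinset_le (by omega)
  have hTs : T ≤ s := (Nat.le_self_pow three_ne_zero T).trans hsT
  have hT : k * (d - 1) + 2 ≤ T ^ 2 := by
    simpa only [T, show k + d - 1 = k + (d - 1) by omega] using
      Nat.mul_add_two_le_sq_add_choose hk (by omega : 1 ≤ d - 1)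
  obtain ⟨𝓒, h𝓒V, h𝓒card, h𝓒cover⟩ :=
    (intersectionGraph (Fin d → ℝ)).exists_containers (2 * M) s V fun A hA hcard =>
      exists_le_card_adj_of_two_mul_lt_card (by omega) hk
        (coe_blockFinset ▸ coe_subset.2 hA) hcard
  refine ⟨𝓒.image (↑), ?_, ?_, fun I hI hdisj => ?_⟩
  · simp only [mem_image, forall_exists_index, and_imp, forall_apply_eq_imp_iff₂]
    intro C hC
    obtain ⟨hCV, hCcard⟩ := h𝓒V C hC
    have : #V / (s + 1) ≤ M := Nat.div_le_of_le_mul (hV.trans (by nlinarith))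
    exact ⟨coe_blockFinset ▸ coe_subset.2 hCV, by rw [Set.ncard_coe_finset]; omega⟩
  · refine (Nat.cast_le.2 (card_image_le.trans h𝓒card)).trans ?_
    exact_mod_cast succ_pow_div_succ_le_exp (by omega) hV (add_one_le_pow_sq_of_le_mul hs hTs hV hT)
  · obtain ⟨C, hC, hIC⟩ := h𝓒cover I (coe_blockFinset ▸ hI)
      (isIndepSet_intersectionGraph_iff.2 hdisj)
    exact ⟨C, mem_image_of_mem _ hC, hIC⟩
end
end

section
/- Let d = 2 and define a relation ≺ on 𝓑 by: B ≺ B' if and only if B ∩ B' ≠ ∅ and t(1) < t'(1), where B is a t-block and B' is a t'-block with t, t' ∈ T. Then ≺ is a strict partial order (irreflexive and transitive) on 𝓑, and two distinct blocks B, B' ∈ 𝓑 are adjacent in G if and only if B ≺ B' or B' ≺ B; that is, G is the comparability graph of ≺. -/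
/-!
The intervals `[c·a, c·(a+1))` of mesh `c = s^u` are nested: `x` lies in the one of index
`⌊x / s^u⌋`, and `⌊x / s^(u+n)⌋ = ⌊x / s^u⌋ / s^n`, so two of them are disjoint or the finer
one lies inside the coarser one. A block is a product of such intervals, and for `t, t' ∈ T`
in the plane `t 0 < t' 0` forces `t' 1 < t 1`: blocks of different shapes meet like a wide and
a tall rectangle, one nested in the other in each coordinate. Along a chain `B ≺ B' ≺ B''` the
nestings compose coordinatewise, and two intersecting blocks of the same shape coincide.
-/

open scoped Classical

noncomputable section

/-- The relation `≺` on blocks in the plane (`d = 2`): `B ≺ B'` iff `B ∩ B' ≠ ∅` and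
`t 0 < t' 0`, where `B` is a `t`-block and `B'` is a `t'`-block with `t, t' ∈ T`. -/
def blockPrec (s k : ℕ) (B B' : Set (Fin 2 → ℝ)) : Prop :=
  (B ∩ B').Nonempty ∧
  ∃ t t' : Fin 2 → ℕ, ∃ p p' : Fin 2 → ℤ,
    (∑ i, t i) = k ∧ (∑ i, t' i) = k ∧
    B = block 2 s t p ∧ B' = block 2 s t' p' ∧ t 0 < t' 0

open Set

def gridIco (c : ℝ) (a : ℤ) : Set ℝ :=
  Ico (c * a) (c * (a + 1))

section gridIco

variable {c c' x : ℝ} {a a' b : ℤ}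

theorem gridIco_nonempty (hc : 0 < c) : (gridIco c a).Nonempty :=
  nonempty_Ico.2 (mul_lt_mul_of_pos_left (lt_add_one _) hc)

theorem mem_gridIco_iff (hc : 0 < c) : x ∈ gridIco c a ↔ ⌊x / c⌋ = a := by
  rw [Int.floor_eq_iff, le_div_iff₀ hc, div_lt_iff₀ hc, gridIco, mem_Ico, mul_comm c,
    mul_comm c]

theorem gridIco_inj (hc : 0 < c) (hc' : 0 < c') :
    gridIco c a = gridIco c' a' ↔ c = c' ∧ a = a' := by
  refine ⟨fun h => ?_, by rintro ⟨rfl, rfl⟩; rfl⟩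
  obtain ⟨hl, hr⟩ := (Ico_eq_Ico_iff (Or.inl (nonempty_Ico.1 (gridIco_nonempty hc)))).1 h
  have hcc : c = c' := by linear_combination hr - hl
  subst hcc
  exact ⟨rfl, by exact_mod_cast mul_left_cancel₀ hc.ne' hl⟩

theorem eq_of_gridIco_inter_nonempty (hc : 0 < c) (h : (gridIco c a ∩ gridIco c b).Nonempty) :
    a = b := by
  obtain ⟨x, ha, hb⟩ := h
  exact ((mem_gridIco_iff hc).1 ha).symm.trans ((mem_gridIco_iff hc).1 hb)

theorem gridIco_subset_of_inter_nonempty (hc : 0 < c) {n : ℕ} (hn : 0 < n)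
    (h : (gridIco c a ∩ gridIco (c * n) b).Nonempty) : gridIco c a ⊆ gridIco (c * n) b := by
  have hcn : 0 < c * n := by positivity
  have coarse_index : ∀ z ∈ gridIco c a, ⌊z / (c * n)⌋ = a / n := fun z hz => by
    rw [div_mul_eq_div_div, Int.floor_div_natCast, (mem_gridIco_iff hc).1 hz]
  obtain ⟨x, hxa, hxb⟩ := h
  intro y hy
  rw [mem_gridIco_iff hcn] at hxb ⊢
  rw [coarse_index y hy, ← hxb, coarse_index x hxa]

end gridIco

section powerGrid

variable {s u v w : ℕ} {a b c : ℤ}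

theorem gridIco_pow_subset (hs : 0 < s) (huv : u ≤ v)
    (h : (gridIco ((s : ℝ) ^ u) a ∩ gridIco ((s : ℝ) ^ v) b).Nonempty) :
    gridIco ((s : ℝ) ^ u) a ⊆ gridIco ((s : ℝ) ^ v) b := by
  obtain ⟨n, rfl⟩ := Nat.exists_eq_add_of_le huv
  have hpow : (s : ℝ) ^ (u + n) = (s : ℝ) ^ u * ((s ^ n : ℕ) : ℝ) := by push_cast; ring
  rw [hpow] at h ⊢
  exact gridIco_subset_of_inter_nonempty (by positivity) (by positivity) h

theorem gridIco_pow_inter_nonempty_trans (hs : 0 < s) (huv : u ≤ v) (hvw : v ≤ w)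
    (h₁ : (gridIco ((s : ℝ) ^ u) a ∩ gridIco ((s : ℝ) ^ v) b).Nonempty)
    (h₂ : (gridIco ((s : ℝ) ^ v) b ∩ gridIco ((s : ℝ) ^ w) c).Nonempty) :
    (gridIco ((s : ℝ) ^ u) a ∩ gridIco ((s : ℝ) ^ w) c).Nonempty :=
  (h₁.mono inter_subset_left).mono <| subset_inter le_rfl <|
    (gridIco_pow_subset hs huv h₁).trans (gridIco_pow_subset hs hvw h₂)

end powerGrid

section block

variable {d s : ℕ} {t t' : Fin d → ℕ} {p p' : Fin d → ℤ}

theorem block_eq_pi : block d s t p = univ.pi fun i => gridIco ((s : ℝ) ^ t i) (p i) :=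
  rfl

theorem block_inter_nonempty_iff :
    (block d s t p ∩ block d s t' p').Nonempty ↔
      ∀ i, (gridIco ((s : ℝ) ^ t i) (p i) ∩ gridIco ((s : ℝ) ^ t' i) (p' i)).Nonempty := by
  rw [block_eq_pi, block_eq_pi, ← pi_inter_distrib, univ_pi_nonempty_iff]

theorem block_inj (hs : 1 < s) : block d s t p = block d s t' p' ↔ t = t' ∧ p = p' := by
  refine ⟨fun h => ?_, by rintro ⟨rfl, rfl⟩; rfl⟩
  have hs₀ : (0 : ℝ) < s := by positivity
  have nonempty : ∀ (t : Fin d → ℕ) (p : Fin d → ℤ), (block d s t p).Nonempty :=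
    fun t p => univ_pi_nonempty_iff.2 fun i => gridIco_nonempty (pow_pos hs₀ _)
  have coord : ∀ i, t i = t' i ∧ p i = p' i := fun i => by
    have hi : gridIco ((s : ℝ) ^ t i) (p i) = gridIco ((s : ℝ) ^ t' i) (p' i) :=
      calc _ = (fun x => x i) '' block d s t p := (eval_image_univ_pi (nonempty t p)).symm
        _ = (fun x => x i) '' block d s t' p' := by rw [h]
        _ = _ := eval_image_univ_pi (nonempty t' p')
    obtain ⟨hpow, hp⟩ := (gridIco_inj (pow_pos hs₀ _) (pow_pos hs₀ _)).1 hi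
    exact ⟨pow_right_injective₀ hs₀ (by exact_mod_cast hs.ne') hpow, hp⟩
  exact ⟨funext fun i => (coord i).1, funext fun i => (coord i).2⟩

theorem eq_of_block_inter_nonempty (hs : 0 < s) (h : (block d s t p ∩ block d s t p').Nonempty) :
    p = p' :=
  funext fun i => eq_of_gridIco_inter_nonempty (by positivity) (block_inter_nonempty_iff.1 h i)

end block

section plane

variable {s k : ℕ} {t t' t'' : Fin 2 → ℕ} {p p' p'' : Fin 2 → ℤ}

theorem apply_one_le_of_apply_zero_le (h : ∑ i, t i = ∑ i, t' i) (h0 : t 0 ≤ t' 0) :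
    t' 1 ≤ t 1 := by
  rw [Fin.sum_univ_two, Fin.sum_univ_two] at h
  omega

theorem eq_of_apply_zero_eq (h : ∑ i, t i = ∑ i, t' i) (h0 : t 0 = t' 0) : t = t' := by
  have h1 := apply_one_le_of_apply_zero_le h h0.le
  have h1' := apply_one_le_of_apply_zero_le h.symm h0.ge
  ext i
  fin_cases i
  exacts [h0, le_antisymm h1' h1]

theorem block_inter_nonempty_trans (hs : 0 < s) (ht : ∑ i, t i = k) (ht' : ∑ i, t' i = k)
    (ht'' : ∑ i, t'' i = k) (h₀₁ : t 0 ≤ t' 0) (h₁₂ : t' 0 ≤ t'' 0)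
    (h₁ : (block 2 s t p ∩ block 2 s t' p').Nonempty)
    (h₂ : (block 2 s t' p' ∩ block 2 s t'' p'').Nonempty) :
    (block 2 s t p ∩ block 2 s t'' p'').Nonempty := by
  rw [block_inter_nonempty_iff, Fin.forall_fin_two] at h₁ h₂ ⊢
  constructor
  · exact gridIco_pow_inter_nonempty_trans hs h₀₁ h₁₂ h₁.1 h₂.1
  · rw [inter_comm]
    refine gridIco_pow_inter_nonempty_trans (b := p' 1) hs
      (apply_one_le_of_apply_zero_le (ht'.trans ht''.symm) h₁₂)
      (apply_one_le_of_apply_zero_le (ht.trans ht'.symm) h₀₁) ?_ ?_ <;> rw [inter_comm]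
    exacts [h₂.2, h₁.2]

theorem blockPrec_block_iff (hs : 1 < s) (ht : ∑ i, t i = k) (ht' : ∑ i, t' i = k) :
    blockPrec s k (block 2 s t p) (block 2 s t' p') ↔
      (block 2 s t p ∩ block 2 s t' p').Nonempty ∧ t 0 < t' 0 := by
  refine ⟨?_, fun ⟨h, hlt⟩ => ⟨h, t, t', p, p', ht, ht', rfl, rfl, hlt⟩⟩
  rintro ⟨h, t₁, t₁', p₁, p₁', -, -, hB, hB', hlt⟩
  rw [← ((block_inj hs).1 hB).1, ← ((block_inj hs).1 hB').1] at hlt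
  exact ⟨h, hlt⟩

end plane

theorem blockGraph_is_comparability_general (s k : ℕ) (hs : 2 ≤ s) :
    (∀ B ∈ blockFamily 2 s k, ¬ blockPrec s k B B) ∧
    (∀ B ∈ blockFamily 2 s k, ∀ B' ∈ blockFamily 2 s k, ∀ B'' ∈ blockFamily 2 s k,
      blockPrec s k B B' → blockPrec s k B' B'' → blockPrec s k B B'') ∧
    (∀ B ∈ blockFamily 2 s k, ∀ B' ∈ blockFamily 2 s k, B ≠ B' →
      ((B ∩ B').Nonempty ↔ blockPrec s k B B' ∨ blockPrec s k B' B)) := by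
  have hs₀ : 0 < s := by omega
  refine ⟨?_, ?_, ?_⟩
  · rintro _ ⟨t, p, ht, -, rfl⟩ h
    exact lt_irrefl _ ((blockPrec_block_iff hs ht ht).1 h).2
  · rintro _ ⟨t, p, ht, -, rfl⟩ _ ⟨t', p', ht', -, rfl⟩ _ ⟨t'', p'', ht'', -, rfl⟩ h₁ h₂
    obtain ⟨h₁, hlt₁⟩ := (blockPrec_block_iff hs ht ht').1 h₁
    obtain ⟨h₂, hlt₂⟩ := (blockPrec_block_iff hs ht' ht'').1 h₂
    exact (blockPrec_block_iff hs ht ht'').2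
      ⟨block_inter_nonempty_trans hs₀ ht ht' ht'' hlt₁.le hlt₂.le h₁ h₂, hlt₁.trans hlt₂⟩
  · rintro _ ⟨t, p, ht, -, rfl⟩ _ ⟨t', p', ht', -, rfl⟩ hne
    rw [blockPrec_block_iff hs ht ht', blockPrec_block_iff hs ht' ht, inter_comm (block 2 s t' p')]
    refine ⟨fun h => ?_, by rintro (⟨h, -⟩ | ⟨h, -⟩) <;> exact h⟩
    rcases lt_trichotomy (t 0) (t' 0) with hlt | heq | hgt
    · exact Or.inl ⟨h, hlt⟩
    · obtain rfl := eq_of_apply_zero_eq (ht.trans ht'.symm) heq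
      exact absurd (congrArg _ (eq_of_block_inter_nonempty hs₀ h)) hne
    · exact Or.inr ⟨h, hgt⟩

/-- In dimension `d = 2`, the relation `≺` is a strict partial order on `𝓑`
(irreflexive and transitive), and two distinct blocks of `𝓑` intersect if and only if
they are comparable under `≺`: the intersection graph of `𝓑` is the comparability
graph of `≺`. -/
theorem blockGraph_is_comparability (s k : ℕ) (hs : 2 ≤ s) (hk : 1 ≤ k) :
    (∀ B ∈ blockFamily 2 s k, ¬ blockPrec s k B B) ∧
    (∀ B ∈ blockFamily 2 s k, ∀ B' ∈ blockFamily 2 s k, ∀ B'' ∈ blockFamily 2 s k,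
      blockPrec s k B B' → blockPrec s k B' B'' → blockPrec s k B B'') ∧
    (∀ B ∈ blockFamily 2 s k, ∀ B' ∈ blockFamily 2 s k, B ≠ B' →
      ((B ∩ B').Nonempty ↔ blockPrec s k B B' ∨ blockPrec s k B' B)) :=
  blockGraph_is_comparability_general s k hs
end
end
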